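/- Let k be a field, write Δ = x_1x_3 + x_2² ∈ k[x_1,x_2,x_3], and for α ∈ k define N_α = (x_1 − 2αx_2Δ − α²x_3Δ², x_2 + αx_3Δ, x_3). Then for all α, β ∈ k one has N_α∘N_β = N_{α+β}, each N_α belongs to SAut_k(A^3) (it is an automorphism of Jacobian 1), and if |k| > 2, then every normal subgroup of SAut_k(A^3) containing SL_3(k) contains N_α for every α ∈ k; in particular it contains the Nagata automorphism N_1. -/

import Mathlib

open MvPolynomial

/-- Endomorphisms of affine `n`-space over `R`: `n`-tuples of polynomials in
`R[x_1,…,x_n]`, with composition given by substitution. -/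
def PolyEnd (R : Type*) [CommRing R] (n : ℕ) : Type _ := Fin n → MvPolynomial (Fin n) R

namespace PolyEnd

variable {R S : Type*} [CommRing R] [CommRing S] {n : ℕ}

noncomputable instance : Monoid (PolyEnd R n) where
  one := fun i => X i
  mul f g := fun i => bind₁ g (f i)
  mul_assoc f g h := funext fun i => (bind₁_bind₁ g h (f i) :)
  one_mul f := funext fun i => (bind₁_X_right f i :)
  mul_one f := funext fun i => (show bind₁ X (f i) = f i by
    rw [bind₁_X_left, AlgHom.id_apply] :)

@[simp] lemma mul_apply (f g : PolyEnd R n) (i : Fin n) :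
    (f * g) i = bind₁ g (f i) := rfl

@[simp] lemma one_apply (i : Fin n) : (1 : PolyEnd R n) i = X i := rfl

/-- The Jacobian determinant of an endomorphism. -/
noncomputable def jac (f : PolyEnd R n) : MvPolynomial (Fin n) R :=
  (Matrix.of fun i j => pderiv j (f i)).det

/-- The chain rule for partial derivatives of a substitution. -/
lemma pderiv_bind₁ (g : Fin n → MvPolynomial (Fin n) R)
    (p : MvPolynomial (Fin n) R) (j : Fin n) :
    pderiv j (bind₁ g p) = ∑ i, bind₁ g (pderiv i p) * pderiv j (g i) := by
  induction p using MvPolynomial.induction_on with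
  | C a => simp
  | add p q hp hq => simp [hp, hq, Finset.sum_add_distrib, add_mul]
  | mul_X p i hp =>
      rw [map_mul, bind₁_X_right, pderiv_mul, hp]
      have key : ∀ l : Fin n, bind₁ g (pderiv l (p * X i)) * pderiv j (g l)
          = bind₁ g (pderiv l p) * pderiv j (g l) * g i
            + (if l = i then bind₁ g p * pderiv j (g i) else 0) := by
        intro l
        rw [pderiv_mul, pderiv_X]
        by_cases h : l = i
        · subst h
          simp only [Pi.single_apply, if_pos rfl, map_add, map_mul, bind₁_X_right,
            bind₁_C_right, if_pos rfl]
          ring_nf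
          simp [mul_comm, mul_left_comm, mul_assoc]
        · simp only [Pi.single_apply, if_neg (Ne.symm h), if_neg h, mul_zero, map_mul,
            map_add, map_zero, add_zero, bind₁_X_right]
          ring
      rw [Finset.sum_congr rfl fun l _ => key l, Finset.sum_add_distrib]
      simp [Finset.sum_mul]

lemma jac_one : jac (1 : PolyEnd R n) = 1 := by
  unfold jac
  have : (Matrix.of fun i j => pderiv j ((1 : PolyEnd R n) i))
      = (1 : Matrix (Fin n) (Fin n) (MvPolynomial (Fin n) R)) := by
    ext i j
    simp [Matrix.one_apply, pderiv_X, Pi.single_apply, eq_comm]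
  rw [this, Matrix.det_one]

/-- The chain rule for Jacobians. -/
lemma jac_mul (f g : PolyEnd R n) : jac (f * g) = bind₁ g (jac f) * jac g := by
  unfold jac
  have : (Matrix.of fun i j => pderiv j ((f * g) i))
      = (Matrix.of fun i l => pderiv l (f i)).map (bind₁ g)
        * (Matrix.of fun l j => pderiv j (g l)) := by
    ext i j : 1
    simp [Matrix.mul_apply, pderiv_bind₁ (g : Fin n → MvPolynomial (Fin n) R)]
  rw [this, Matrix.det_mul]
  congr 1
  exact ((bind₁ g).map_det (Matrix.of fun i l => pderiv l (f i))).symm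

end PolyEnd

/-- Automorphisms of affine `n`-space over `R` : endomorphisms admitting a two-sided
compositional inverse. -/
abbrev PolyAut (R : Type*) [CommRing R] (n : ℕ) := (PolyEnd R n)ˣ

namespace PolyAut

variable {R S : Type*} [CommRing R] [CommRing S] {n : ℕ}

lemma bind₁_val_injective (f : PolyAut R n) :
    Function.Injective (bind₁ (σ := Fin n) (f.val : Fin n → MvPolynomial (Fin n) R)) := by
  intro p q h
  have hinv : ∀ r : MvPolynomial (Fin n) R, bind₁ (f.inv : Fin n → _) (bind₁ (f.val : Fin n → _) r) = r := by
    intro r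
    erw [bind₁_bind₁]
    have : (fun i => bind₁ (f.inv : Fin n → _) ((f.val : Fin n → _) i)) = (f.val * f.inv : PolyEnd R n) := rfl
    rw [this, f.val_inv]
    show bind₁ (fun i => X i) r = r
    rw [show (fun i : Fin n => (X i : MvPolynomial (Fin n) R)) = X from rfl,
      bind₁_X_left, AlgHom.id_apply]
  calc p = bind₁ (f.inv : Fin n → _) (bind₁ (f.val : Fin n → _) p) := (hinv p).symm
    _ = bind₁ (f.inv : Fin n → _) (bind₁ (f.val : Fin n → _) q) := by rw [h]
    _ = q := hinv q

end PolyAut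

/-- The subgroup of automorphisms of Jacobian `1`. -/
noncomputable def SAutGrp (R : Type*) [CommRing R] (n : ℕ) : Subgroup (PolyAut R n) where
  carrier := {f | PolyEnd.jac f.val = 1}
  one_mem' := PolyEnd.jac_one
  mul_mem' := by
    intro f g hf hg
    show PolyEnd.jac (f.val * g.val) = 1
    rw [PolyEnd.jac_mul, hf, hg, map_one, one_mul]
  inv_mem' := by
    intro f hf
    show PolyEnd.jac f.inv = 1
    apply PolyAut.bind₁_val_injective f
    have h1 : PolyEnd.jac (f.inv * f.val) = 1 := by
      rw [f.inv_val]; exact PolyEnd.jac_one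
    rw [PolyEnd.jac_mul, hf, mul_one] at h1
    rw [map_one]
    exact h1

lemma mem_SAutGrp_iff {R : Type*} [CommRing R] {n : ℕ} (f : PolyAut R n) :
    f ∈ SAutGrp R n ↔ PolyEnd.jac f.val = 1 := Iff.rfl

section Translations

variable {R : Type*} [CommRing R] {n : ℕ}

/-- The translation endomorphism `(x_1 + c_1, …, x_n + c_n)`. -/
noncomputable def translEnd (c : Fin n → R) : PolyEnd R n := fun i => X i + C (c i)

lemma translEnd_mul (c d : Fin n → R) :
    translEnd c * translEnd d = translEnd (c + d) := by
  funext i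
  show bind₁ (translEnd d) (translEnd c i) = translEnd (c + d) i
  simp only [translEnd, map_add, bind₁_C_right]
  rw [show bind₁ (translEnd d) (X i) = translEnd d i from bind₁_X_right _ i]
  erw [bind₁_C_right]
  show X i + C (d i) + C (c i) = X i + C (c i + d i)
  rw [map_add]; ring

lemma translEnd_zero : translEnd (0 : Fin n → R) = 1 := by
  funext i
  show X i + C 0 = X i
  simp

/-- The translation automorphism `(x_1 + c_1, …, x_n + c_n)`. -/
noncomputable def transl (c : Fin n → R) : PolyAut R n where
  val := translEnd c
  inv := translEnd (-c)
  val_inv := by rw [translEnd_mul, add_neg_cancel, translEnd_zero]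
  inv_val := by rw [translEnd_mul, neg_add_cancel, translEnd_zero]

@[simp] lemma transl_val (c : Fin n → R) : (transl c).val = translEnd c := rfl

lemma jac_translEnd (c : Fin n → R) : PolyEnd.jac (translEnd c) = 1 := by
  unfold PolyEnd.jac
  have : (Matrix.of fun i j => pderiv j (translEnd c i))
      = (1 : Matrix (Fin n) (Fin n) (MvPolynomial (Fin n) R)) := by
    ext i j
    simp [translEnd, Matrix.one_apply, pderiv_X, Pi.single_apply, eq_comm]
  rw [this, Matrix.det_one]

lemma transl_mem_SAutGrp (c : Fin n → R) : transl c ∈ SAutGrp R n := jac_translEnd c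

/-- The translation as element of `SAut`. -/
noncomputable def translS (c : Fin n → R) : ↥(SAutGrp R n) := ⟨transl c, transl_mem_SAutGrp c⟩

/-- `f` is a translation. -/
def IsTranslation (f : PolyAut R n) : Prop := ∃ c : Fin n → R, f = transl c

end Translations

section Linear

variable {R : Type*} [CommRing R] {n : ℕ}

/-- The linear endomorphism associated with a matrix. -/
noncomputable def linEnd (M : Matrix (Fin n) (Fin n) R) : PolyEnd R n :=
  fun i => ∑ j, C (M i j) * X j

/-- `f` is a linear automorphism (i.e. in the image of `GL_n`). -/
def IsLinear (f : PolyAut R n) : Prop := ∃ M : Matrix (Fin n) (Fin n) R, f.val = linEnd M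

/-- `f` is a linear automorphism given by a matrix of determinant 1
(i.e. in the image of `SL_n`). -/
def MemSL (f : PolyAut R n) : Prop :=
  ∃ M : Matrix (Fin n) (Fin n) R, M.det = 1 ∧ f.val = linEnd M

/-- `f` is a triangular automorphism. -/
def IsTriangular (f : PolyAut R n) : Prop :=
  ∃ (a : Fin n → Rˣ) (b : Fin n → MvPolynomial (Fin n) R),
    (∀ i : Fin n, b i ∈ MvPolynomial.supported R {j : Fin n | (j : ℕ) < (i : ℕ)}) ∧
    ∀ i : Fin n, f.val i = C ((a i : R)) * X i + b i

/-- The tame subgroup, generated by linear and triangular automorphisms. -/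
noncomputable def TameGrp (R : Type*) [CommRing R] (n : ℕ) : Subgroup (PolyAut R n) :=
  Subgroup.closure {f | IsLinear f ∨ IsTriangular f}

end Linear

section Map

variable {R S : Type*} [CommRing R] [CommRing S] {n : ℕ}

/-- Applying a ring homomorphism to all coefficients, as a monoid homomorphism of
endomorphisms of affine `n`-space. -/
noncomputable def endMapHom (φ : R →+* S) : PolyEnd R n →* PolyEnd S n where
  toFun f := fun i => MvPolynomial.map φ (f i)
  map_one' := funext fun i => by
    show MvPolynomial.map φ (X i) = X i
    simp
  map_mul' f g := funext fun i => by
    show MvPolynomial.map φ (bind₁ g (f i)) = bind₁ (fun j => MvPolynomial.map φ (g j)) (MvPolynomial.map φ (f i))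
    erw [map_bind₁]

/-- Applying a ring homomorphism to all coefficients, on automorphisms. -/
noncomputable def autMap (φ : R →+* S) : PolyAut R n →* PolyAut S n :=
  Units.map (endMapHom φ)

lemma jac_endMapHom (φ : R →+* S) (f : PolyEnd R n) :
    PolyEnd.jac (endMapHom φ f) = MvPolynomial.map φ (PolyEnd.jac f) := by
  unfold PolyEnd.jac
  have : (Matrix.of fun i j => pderiv j ((endMapHom φ f) i))
      = (Matrix.of fun i j => pderiv j (f i)).map (MvPolynomial.map φ) :=
    Matrix.ext fun i j => pderiv_map
  rw [this, RingHom.map_det]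
  rfl

/-- Specialisation of an automorphism over `R[t]` at a value `t₀ ∈ R`. -/
noncomputable def specAut (t0 : R) : PolyAut (Polynomial R) n →* PolyAut R n :=
  autMap (Polynomial.evalRingHom t0)

lemma specAut_mem_SAutGrp (h : PolyAut (Polynomial R) n)
    (hh : h ∈ SAutGrp (Polynomial R) n) (t0 : R) :
    specAut t0 h ∈ SAutGrp R n := by
  show PolyEnd.jac ((specAut t0 h).val) = 1
  have : (specAut t0 h).val = endMapHom (Polynomial.evalRingHom t0) h.val := rfl
  rw [this, jac_endMapHom, hh, map_one]

/-- Specialisation, from `SAut` over `R[t]` to `SAut` over `R`. -/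
noncomputable def specSAut (t0 : R) (h : PolyAut (Polynomial R) n)
    (hh : h ∈ SAutGrp (Polynomial R) n) : ↥(SAutGrp R n) :=
  ⟨specAut t0 h, specAut_mem_SAutGrp h hh t0⟩

/-- A subgroup `N` of `SAut_k(𝔸ⁿ)` is closed under specialisation if for every
automorphism `h` over `k[t]` of Jacobian `1` all of whose specialisations at
`t₀ ≠ 0` lie in `N`, the specialisation at `0` also lies in `N`. Every subgroup
that is closed in the ind-topology has this property. -/
def ClosedUnderSpec {R : Type*} [CommRing R] {n : ℕ} (N : Subgroup ↥(SAutGrp R n)) : Prop :=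
  ∀ (h : PolyAut (Polynomial R) n) (hh : h ∈ SAutGrp (Polynomial R) n),
    (∀ t0 : R, t0 ≠ 0 → specSAut t0 h hh ∈ N) → specSAut 0 h hh ∈ N

/-- A subgroup `N` of `Aut_k(𝔸ⁿ)` is closed under specialisation if for every
automorphism `h` over `k[t]` all of whose specialisations at `t₀ ≠ 0` lie in `N`,
the specialisation at `0` also lies in `N`. -/
def ClosedUnderSpecAut {R : Type*} [CommRing R] {n : ℕ} (N : Subgroup (PolyAut R n)) : Prop :=
  ∀ h : PolyAut (Polynomial R) n,
    (∀ t0 : R, t0 ≠ 0 → specAut t0 h ∈ N) → specAut 0 h ∈ N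

end Map


/-- `Δ = x₁x₃ + x₂²`. -/
noncomputable def nagDelta (k : Type*) [Field k] : MvPolynomial (Fin 3) k :=
  X 0 * X 2 + X 1 ^ 2

/-- The Nagata family `N_α = (x₁ - 2αx₂Δ - α²x₃Δ², x₂ + αx₃Δ, x₃)`. -/
noncomputable def nagEnd {k : Type*} [Field k] (α : k) : PolyEnd k 3 := fun i =>
  if i = 0 then X 0 - C (2 * α) * X 1 * nagDelta k - C (α ^ 2) * X 2 * nagDelta k ^ 2
  else if i = 1 then X 1 + C α * X 2 * nagDelta k
  else X 2

/-!
The polynomial `Δ` is invariant under every `N_β` and under the diagonal matrices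
`t_u = diag(u⁻¹, 1, u) ∈ SL₃(k)`. Invariance under `N_β` makes `N_α ∘ N_β = N_{α+β}` a direct
substitution; invariance under `t_u` gives `t_u⁻¹ N_β t_u = N_{uβ}`, so the commutator
`⁅t_u⁻¹, N_β⁆ = N_{uβ} N_{-β} = N_{(u-1)β}` lies in every normal subgroup containing `t_u`.
When `|k| > 2` some `u ≠ 0, 1` exists, and `β = α / (u - 1)` produces `N_α`.
-/

open scoped commutatorElement

lemma exists_ne_ne_of_three_distinct {α : Type*} {x y z : α} (hxy : x ≠ y) (hxz : x ≠ z)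
    (hyz : y ≠ z) (a b : α) : ∃ l, l ≠ a ∧ l ≠ b := by
  by_contra! h
  have key (l : α) : l = a ∨ l = b := or_iff_not_imp_left.2 (h l)
  rcases key x with rfl | rfl <;> rcases key y with rfl | rfl <;> rcases key z with rfl | rfl <;>
    contradiction

lemma commutatorElement_inv_left_of_mul_eq {G : Type*} [Group G] {s v w : G}
    (h : s * w = v * s) : ⁅s⁻¹, v⁆ = w * v⁻¹ := by
  rw [commutatorElement_def, inv_inv, mul_assoc s⁻¹, ← h, inv_mul_cancel_left]

namespace PolyEnd

variable {R : Type*} [CommRing R] {n : ℕ}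

@[simp] lemma bind₁_X (f : PolyEnd R n) (i : Fin n) : bind₁ f (X i) = f i := bind₁_X_right f i

@[simp] lemma bind₁_C (f : PolyEnd R n) (r : R) : bind₁ f (C r) = C r := bind₁_C_right f r

end PolyEnd

section Linear

variable {R : Type*} [CommRing R] {n : ℕ}

lemma linEnd_mul (M M' : Matrix (Fin n) (Fin n) R) : linEnd M * linEnd M' = linEnd (M * M') := by
  funext i
  simp only [PolyEnd.mul_apply, linEnd, map_sum, map_mul, PolyEnd.bind₁_C, PolyEnd.bind₁_X,
    Matrix.mul_apply, Finset.mul_sum, Finset.sum_mul, ← mul_assoc]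
  exact Finset.sum_comm

lemma linEnd_one : linEnd (1 : Matrix (Fin n) (Fin n) R) = 1 := by
  funext i
  simp [linEnd, Matrix.one_apply]

lemma linEnd_diagonal (d : Fin n → R) (i : Fin n) :
    linEnd (Matrix.diagonal d) i = C (d i) * X i := by
  simp [linEnd, Matrix.diagonal_apply, apply_ite C, ite_mul]

lemma pderiv_linEnd (M : Matrix (Fin n) (Fin n) R) (i j : Fin n) :
    pderiv j (linEnd M i) = C (M i j) := by
  simp [linEnd, pderiv_X, Pi.single_apply]

lemma jac_linEnd (M : Matrix (Fin n) (Fin n) R) : PolyEnd.jac (linEnd M) = C M.det := by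
  rw [PolyEnd.jac, RingHom.map_det]
  congr 1
  ext i j : 1
  exact pderiv_linEnd M i j

noncomputable def linEndHom : Matrix (Fin n) (Fin n) R →* PolyEnd R n where
  toFun := linEnd
  map_one' := linEnd_one
  map_mul' M M' := (linEnd_mul M M').symm

noncomputable def slToAut : Matrix.SpecialLinearGroup (Fin n) R →* PolyAut R n :=
  (Units.map linEndHom).comp Matrix.SpecialLinearGroup.toGL

lemma slToAut_val (A : Matrix.SpecialLinearGroup (Fin n) R) : (slToAut A).val = linEnd A := rfl

lemma slToAut_mem_SAutGrp (A : Matrix.SpecialLinearGroup (Fin n) R) :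
    slToAut A ∈ SAutGrp R n := by
  rw [mem_SAutGrp_iff, slToAut_val, jac_linEnd, A.det_coe, C_1]

noncomputable def slToSAut : Matrix.SpecialLinearGroup (Fin n) R →* SAutGrp R n :=
  slToAut.codRestrict (SAutGrp R n) slToAut_mem_SAutGrp

lemma memSL_slToSAut (A : Matrix.SpecialLinearGroup (Fin n) R) :
    MemSL (slToSAut A : PolyAut R n) :=
  ⟨A, A.det_coe, rfl⟩

end Linear

section Nagata

variable {k : Type*} [Field k]

lemma bind₁_nagEnd_nagDelta (β : k) : bind₁ (nagEnd β) (nagDelta k) = nagDelta k := by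
  simp only [nagDelta, map_add, map_mul, map_pow, PolyEnd.bind₁_X, nagEnd]
  simp only [Fin.isValue, Fin.reduceEq, if_true, if_false, map_ofNat]
  ring

lemma nagEnd_mul (α β : k) : nagEnd α * nagEnd β = nagEnd (α + β) := by
  funext i
  fin_cases i <;>
    simp only [PolyEnd.mul_apply, nagEnd, Fin.isValue, Fin.zero_eta, Fin.mk_one, Fin.reduceFinMk,
      Fin.reduceEq, if_true, if_false, map_add, map_sub, map_mul, map_pow, PolyEnd.bind₁_X,
      PolyEnd.bind₁_C, bind₁_nagEnd_nagDelta, map_ofNat] <;>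
    ring

lemma nagEnd_zero : nagEnd (0 : k) = 1 := by
  funext i
  fin_cases i <;> simp [nagEnd]

lemma jac_nagEnd (α : k) : PolyEnd.jac (nagEnd α) = 1 := by
  rw [PolyEnd.jac, Matrix.det_fin_three]
  simp only [Matrix.of_apply, nagEnd, nagDelta, Fin.isValue, Fin.reduceEq, if_true, if_false,
    map_add, map_sub, map_mul, map_pow, pderiv_mul, pderiv_C, pderiv_pow, pderiv_X,
    Pi.single_apply, Nat.cast_ofNat]
  simp only [map_ofNat]
  ring

noncomputable def nagSAut (α : k) : SAutGrp k 3 :=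
  ⟨⟨nagEnd α, nagEnd (-α), by rw [nagEnd_mul, add_neg_cancel, nagEnd_zero],
    by rw [nagEnd_mul, neg_add_cancel, nagEnd_zero]⟩, jac_nagEnd α⟩

lemma nagSAut_mul (α β : k) : nagSAut α * nagSAut β = nagSAut (α + β) :=
  Subtype.ext (Units.ext (nagEnd_mul α β))

lemma nagSAut_zero : nagSAut (0 : k) = 1 :=
  Subtype.ext (Units.ext nagEnd_zero)

lemma nagSAut_inv (α : k) : (nagSAut α)⁻¹ = nagSAut (-α) :=
  inv_eq_of_mul_eq_one_right (by rw [nagSAut_mul, add_neg_cancel, nagSAut_zero])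

def deltaTorus (u : kˣ) : Matrix.SpecialLinearGroup (Fin 3) k :=
  ⟨Matrix.diagonal ![(u : k)⁻¹, 1, (u : k)], by simp [Matrix.det_diagonal, Fin.prod_univ_three]⟩

lemma linEnd_deltaTorus (u : kˣ) (i : Fin 3) :
    linEnd (deltaTorus u : Matrix (Fin 3) (Fin 3) k) i = C (![(u : k)⁻¹, 1, (u : k)] i) * X i :=
  linEnd_diagonal _ i

lemma C_inv_mul_C_of_ne_zero {σ : Type*} {a : k} (ha : a ≠ 0) :
    C a⁻¹ * C a = (1 : MvPolynomial σ k) := by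
  rw [← C_mul, inv_mul_cancel₀ ha, C_1]

lemma bind₁_deltaTorus_nagDelta (u : kˣ) :
    bind₁ (linEnd (deltaTorus u : Matrix (Fin 3) (Fin 3) k)) (nagDelta k) = nagDelta k := by
  simp only [nagDelta, map_add, map_mul, map_pow, PolyEnd.bind₁_X, linEnd_deltaTorus,
    Matrix.cons_val_zero, Matrix.cons_val_one, Matrix.cons_val_two, Matrix.tail_cons,
    Matrix.head_cons, C_1, one_mul]
  linear_combination (X 0 * X 2) * C_inv_mul_C_of_ne_zero u.ne_zero

lemma deltaTorus_mul_nagEnd (u : kˣ) (α : k) :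
    linEnd (deltaTorus u : Matrix (Fin 3) (Fin 3) k) * nagEnd (u * α)
      = nagEnd α * linEnd (deltaTorus u : Matrix (Fin 3) (Fin 3) k) := by
  funext i
  fin_cases i <;>
    simp only [PolyEnd.mul_apply, nagEnd, linEnd_deltaTorus, Fin.isValue, Fin.zero_eta,
      Fin.mk_one, Fin.reduceFinMk, Fin.reduceEq, if_true, if_false, map_add, map_sub, map_mul,
      map_pow, PolyEnd.bind₁_X, PolyEnd.bind₁_C, bind₁_deltaTorus_nagDelta, map_ofNat,
      Matrix.cons_val_zero, Matrix.cons_val_one, Matrix.cons_val_two, Matrix.tail_cons,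
      Matrix.head_cons, C_1, one_mul]
  · linear_combination (-2 * C α * X 1 * nagDelta k - C α ^ 2 * C (u : k) * X 2 * nagDelta k ^ 2)
      * C_inv_mul_C_of_ne_zero u.ne_zero
  · ring

lemma slToSAut_deltaTorus_mul_nagSAut (u : kˣ) (α : k) :
    slToSAut (deltaTorus u) * nagSAut (u * α) = nagSAut α * slToSAut (deltaTorus u) :=
  Subtype.ext (Units.ext (deltaTorus_mul_nagEnd u α))

lemma nagSAut_mem_of_deltaTorus_mem {N : Subgroup (SAutGrp k 3)} [N.Normal] {u : kˣ} (hu : u ≠ 1)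
    (htorus : slToSAut (deltaTorus u) ∈ N) (α : k) : nagSAut α ∈ N := by
  have hu' : (u : k) - 1 ≠ 0 := sub_ne_zero.mpr (Units.val_eq_one.not.mpr hu)
  have hcomm : ⁅(slToSAut (deltaTorus u))⁻¹, nagSAut (α / ((u : k) - 1))⁆ = nagSAut α := by
    rw [commutatorElement_inv_left_of_mul_eq (slToSAut_deltaTorus_mul_nagSAut u _), nagSAut_inv,
      nagSAut_mul]
    congr 1
    field_simp
    ring
  rw [← hcomm]
  exact Subgroup.commutator_le_left N ⊤
    (Subgroup.commutator_mem_commutator (N.inv_mem htorus) (Subgroup.mem_top _))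

end Nagata

/-- **Example (the Nagata automorphism).**  `N_α ∘ N_β = N_{α+β}`, each `N_α` is an automorphism
of Jacobian 1, and if `|k| > 2` then every normal subgroup of `SAut_k(𝔸³)` containing `SL₃(k)`
contains all the `N_α`; in particular it contains the Nagata automorphism `N₁`. -/
theorem nagata_mem_normal_subgroup_containing_SL {k : Type*} [Field k] :
    (∀ α β : k, nagEnd α * nagEnd β = nagEnd (α + β)) ∧
    (∀ α : k, ∃ u : PolyAut k 3, u.val = nagEnd α ∧ u ∈ SAutGrp k 3) ∧
    ((∃ x y z : k, x ≠ y ∧ x ≠ z ∧ y ≠ z) →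
      ∀ N : Subgroup ↥(SAutGrp k 3), N.Normal →
        (∀ f : ↥(SAutGrp k 3), MemSL (f : PolyAut k 3) → f ∈ N) →
        ∀ (α : k) (u : ↥(SAutGrp k 3)), (u : PolyAut k 3).val = nagEnd α → u ∈ N) := by
  refine ⟨nagEnd_mul, fun α => ⟨nagSAut α, rfl, (nagSAut α).2⟩, ?_⟩
  rintro ⟨x, y, z, hxy, hxz, hyz⟩ N hN hSL α u hu
  obtain ⟨l, hl0, hl1⟩ := exists_ne_ne_of_three_distinct hxy hxz hyz 0 1
  obtain rfl : u = nagSAut α := Subtype.ext (Units.ext hu)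
  have hl : Units.mk0 l hl0 ≠ 1 := fun h => hl1 (congrArg Units.val h)
  exact nagSAut_mem_of_deltaTorus_mem hl (hSL _ (memSL_slToSAut _)) α
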